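/- arXiv:2604.26115 — 9 statements merged into one kernel-verified Lean document; each statement's English description precedes it below -/
import Mathlib

section
/- Let (P, ∘, [·,·]) be a transposed Poisson algebra over a field F of characteristic different from 2. Then for all u, v, x, y ∈ P one has [u∘x, v∘y] = (u∘v)∘[x,y] + (x∘y)∘[u,v]. -/
/-- In a transposed Poisson algebra `(P, ∘, [·,·])` over a field `F`
of characteristic different from two, we have
`[u∘x, v∘y] = (u∘v)∘[x,y] + (x∘y)∘[u,v]` for all `u v x y`. -/
theorem tpa_bracket_mul_identity {F P : Type*} [Field F] (hchar : (2 : F) ≠ 0)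
    [AddCommGroup P] [Module F P]
    (mul bra : P →ₗ[F] P →ₗ[F] P)
    (hcomm : ∀ x y : P, mul x y = mul y x)
    (hassoc : ∀ x y z : P, mul (mul x y) z = mul x (mul y z))
    (halt : ∀ x : P, bra x x = 0)
    (hjac : ∀ x y z : P, bra x (bra y z) + bra y (bra z x) + bra z (bra x y) = 0)
    (hleib : ∀ x y z : P, (2 : F) • mul x (bra y z) = bra (mul x y) z + bra y (mul x z)) :
    ∀ u v x y : P,
      bra (mul u x) (mul v y) = mul (mul u v) (bra x y) + mul (mul x y) (bra u v) := by
  -- skew-symmetry of the bracket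
  have hskew : ∀ a b : P, bra a b = - bra b a := by
    intro a b
    have h := halt (a + b)
    simp only [map_add, LinearMap.add_apply, halt a, halt b, zero_add, add_zero] at h
    exact (neg_eq_of_add_eq_zero_right h).symm
  -- symmetrization identity: [ux,vy] + [vx,uy] = 2•(uv)[x,y]
  have key : ∀ u v x y : P, bra (mul u x) (mul v y) + bra (mul v x) (mul u y)
      = (2 : F) • mul (mul u v) (bra x y) := by
    intro u v x y
    have h1 := hleib u x (mul v y)
    have h2 := congrArg (mul u) (hleib v x y)
    have h3 := hleib (mul u v) x y
    have h4 := hleib u (mul v x) y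
    simp only [map_add, map_smul] at h2
    rw [← hassoc u v y] at h1
    rw [← hassoc u v (bra x y)] at h2
    rw [← hassoc u v x] at h4
    linear_combination (norm := module) (-(1 : F)) • h1 - (2 : F) • h2 + h3 - h4
  intro u v x y
  have e1 := key u v x y
  have e2 := key x y u v
  rw [hcomm x u, hcomm y v, hcomm y u, hcomm x v, hskew (mul u y) (mul v x)] at e2
  have : (2 : F) • bra (mul u x) (mul v y)
      = (2 : F) • (mul (mul u v) (bra x y) + mul (mul x y) (bra u v)) := by
    linear_combination (norm := module) e1 + e2
  exact smul_right_injective P hchar this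
end

section
/- Let (P, ∘, [·,·]) be a transposed Poisson algebra over a field F of characteristic different from 2. Then for all x, y, z ∈ P and every natural number k ≥ 1 the following identities of linear operators on P hold: (1) P_x^{2k} ∘ Q_y = Q_{x^k ∘ y} ∘ P_x^k; (2) P_x^{2k−1} ∘ Q_y = (1/2)·Q_{x^{k−1} ∘ y} ∘ P_x^k + (1/2)·Q_{x^k ∘ y} ∘ P_x^{k−1}; (3) 2·P_{x∘y} ∘ Q_z = Q_{x∘z} ∘ P_y + Q_{y∘z} ∘ P_x. -/
/-- Operator identities in a transposed Poisson algebra.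
Here `P_x = mul x` and `Q_y = bra y` as elements of `Module.End F P`,
and `x^k ∘ y = (P_x)^k y` (with the convention `x^0 ∘ y = y`). -/
theorem tpa_operator_identities {F P : Type*} [Field F] (hchar : (2 : F) ≠ 0)
    [AddCommGroup P] [Module F P]
    (mul bra : P →ₗ[F] P →ₗ[F] P)
    (hcomm : ∀ x y : P, mul x y = mul y x)
    (hassoc : ∀ x y z : P, mul (mul x y) z = mul x (mul y z))
    (halt : ∀ x : P, bra x x = 0)
    (hjac : ∀ x y z : P, bra x (bra y z) + bra y (bra z x) + bra z (bra x y) = 0)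
    (hleib : ∀ x y z : P, (2 : F) • mul x (bra y z) = bra (mul x y) z + bra y (mul x z)) :
    ∀ (x y z : P) (k : ℕ), 1 ≤ k →
      ((mul x : Module.End F P) ^ (2 * k) * (bra y : Module.End F P)
          = (bra (((mul x : Module.End F P) ^ k) y) : Module.End F P)
              * (mul x : Module.End F P) ^ k)
      ∧ ((mul x : Module.End F P) ^ (2 * k - 1) * (bra y : Module.End F P)
          = (2 : F)⁻¹ • ((bra (((mul x : Module.End F P) ^ (k - 1)) y) : Module.End F P)
                * (mul x : Module.End F P) ^ k)
            + (2 : F)⁻¹ • ((bra (((mul x : Module.End F P) ^ k) y) : Module.End F P)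
                * (mul x : Module.End F P) ^ (k - 1)))
      ∧ ((2 : F) • ((mul (mul x y) : Module.End F P) * (bra z : Module.End F P))
          = (bra (mul x z) : Module.End F P) * (mul y : Module.End F P)
            + (bra (mul y z) : Module.End F P) * (mul x : Module.End F P)) := by
  -- element-level identity (3)
  have three : ∀ a b c w : P, (2:F) • mul (mul a b) (bra c w)
      = bra (mul a c) (mul b w) + bra (mul b c) (mul a w) := by
    intro a b c w
    have hB := congrArg (mul a) (hleib b c w)
    rw [map_smul, map_add] at hB
    have hD := hleib a (mul b c) w
    have hA := hleib a c (mul b w)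
    have hS := hleib (mul a b) c w
    simp only [hassoc] at hB hD hA hS ⊢
    linear_combination (norm := module) (2:F) • hB + hD + hA - hS
  -- operator forms
  have threeOp : ∀ a b c : P, (2:F) • ((mul (mul a b) : Module.End F P) * bra c)
      = (bra (mul a c) : Module.End F P) * mul b
        + (bra (mul b c) : Module.End F P) * mul a := by
    intro a b c
    ext w
    simpa using three a b c w
  have starOp : ∀ a b : P, (2:F) • ((mul a : Module.End F P) * bra b)
      = (bra b : Module.End F P) * mul a + bra (mul a b) := by
    intro a b
    ext w
    simpa using (hleib a b w).trans (add_comm _ _)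
  have mulEnd : ∀ a b : P, (mul (mul a b) : Module.End F P)
      = (mul a : Module.End F P) * (mul b : Module.End F P) := by
    intro a b
    ext w
    exact hassoc a b w
  intro x y z k hk
  -- P of powers of x
  have mulpowEnd : ∀ i : ℕ, (mul (((mul x : Module.End F P) ^ i) x) : Module.End F P)
      = (mul x : Module.End F P) ^ (i + 1) := by
    intro i
    induction i with
    | zero => simp
    | succ n ih =>
        have : ((mul x : Module.End F P) ^ (n + 1)) x
            = mul x (((mul x : Module.End F P) ^ n) x) := by
          rw [pow_succ']
          rfl
        rw [this, mulEnd, ih, ← pow_succ']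
  -- key identity for powers
  have keyn : ∀ i j : ℕ, ∀ c : P,
      (2:F) • ((mul x : Module.End F P) ^ (i + 1 + (j + 1)) * bra c)
      = (bra (((mul x : Module.End F P) ^ (i + 1)) c) : Module.End F P)
          * (mul x : Module.End F P) ^ (j + 1)
        + (bra (((mul x : Module.End F P) ^ (j + 1)) c) : Module.End F P)
          * (mul x : Module.End F P) ^ (i + 1) := by
    intro i j c
    have h := threeOp (((mul x : Module.End F P) ^ i) x) (((mul x : Module.End F P) ^ j) x) c
    rw [mulEnd, mulpowEnd i, mulpowEnd j, ← pow_add] at h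
    exact h
  obtain ⟨m, rfl⟩ : ∃ m, k = m + 1 := ⟨k - 1, (Nat.succ_pred_eq_of_pos hk).symm⟩
  refine ⟨?_, ?_, threeOp x y z⟩
  · -- part (1)
    have h := keyn m m y
    have e2 : 2 * (m + 1) = m + 1 + (m + 1) := by ring
    rw [e2]
    refine smul_right_injective (Module.End F P) hchar ?_
    show (2:F) • _ = (2:F) • _
    rw [h, two_smul]
  · -- part (2)
    have e1 : m + 1 - 1 = m := by omega
    rw [e1]
    have h2 : (2:F) • ((mul x : Module.End F P) ^ (2 * (m + 1) - 1) * bra y)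
        = (bra (((mul x : Module.End F P) ^ m) y) : Module.End F P)
            * (mul x : Module.End F P) ^ (m + 1)
          + (bra (((mul x : Module.End F P) ^ (m + 1)) y) : Module.End F P)
            * (mul x : Module.End F P) ^ m := by
      cases m with
      | zero =>
          simpa [pow_one] using starOp x y
      | succ n =>
          have e3 : 2 * (n + 1 + 1) - 1 = n + 1 + 1 + (n + 1) := by omega
          rw [e3]
          rw [keyn (n + 1) n y]
          exact add_comm _ _
    have : (mul x : Module.End F P) ^ (2 * (m + 1) - 1) * bra y
        = (2:F)⁻¹ • ((2:F) • ((mul x : Module.End F P) ^ (2 * (m + 1) - 1) * bra y)) := by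
      rw [smul_smul, inv_mul_cancel₀ hchar, one_smul]
    rw [this, h2, smul_add]
end

section
/- Let (P, ∘, [·,·]) be a transposed Poisson algebra over a field F of characteristic different from 2. Then for all x, y ∈ P and natural numbers k, s with 1 ≤ s ≤ k the following identities of linear operators on P hold, where binomial coefficients are regarded as elements of F: if s is even, then C(2k, s)·Q_{x^{k−s/2} ∘ y} ∘ P_x^{k−s/2} − Σ_{j=0}^{s} C(k, j)·C(k, s−j)·Q_{x^{k−j} ∘ y} ∘ P_x^{k−s+j} = 0; if s is odd, then C(2k, s)·Q_{x^{k−(s+1)/2} ∘ y} ∘ P_x^{k−(s−1)/2} + C(2k, s)·Q_{x^{k−(s−1)/2} ∘ y} ∘ P_x^{k−(s+1)/2} − 2·Σ_{j=0}^{s} C(k, j)·C(k, s−j)·Q_{x^{k−j} ∘ y} ∘ P_x^{k−s+j} = 0. -/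
open Finset in
private lemma tpa_vandermonde (k s : ℕ) :
    ∑ j ∈ range (s + 1), k.choose j * k.choose (s - j) = (2 * k).choose s := by
  rw [two_mul, Nat.add_choose_eq, Finset.Nat.sum_antidiagonal_eq_sum_range_succ_mk]

open Finset in
private lemma tpa_sum2 (k s : ℕ) (hsk : s ≤ k) :
    2 * ∑ j ∈ range (s + 1), k.choose j * k.choose (s - j) * (k - j)
      = (2 * k - s) * (2 * k).choose s := by
  have h := Finset.sum_range_reflect (fun j => k.choose j * k.choose (s - j) * (k - j)) (s + 1)
  rw [two_mul]
  nth_rewrite 1 [← h]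
  rw [← Finset.sum_add_distrib]
  have key : ∑ j ∈ range (s + 1),
      ((fun j => k.choose j * k.choose (s - j) * (k - j)) (s + 1 - 1 - j)
        + k.choose j * k.choose (s - j) * (k - j))
      = ∑ j ∈ range (s + 1), k.choose j * k.choose (s - j) * (2 * k - s) := by
    refine Finset.sum_congr rfl fun j hj => ?_
    have hj' : j ≤ s := by simpa [Nat.lt_succ_iff] using hj
    simp only []
    have e1 : s + 1 - 1 - j = s - j := by omega
    have e2 : s - (s - j) = j := by omega
    have e3 : k - (s - j) + (k - j) = 2 * k - s := by omega
    rw [e1, e2, ← e3]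
    ring
  rw [key, ← Finset.sum_mul, tpa_vandermonde, mul_comm]

open Finset in
/-- Binomial operator identities in a transposed Poisson algebra.
Here `P_x = mul x` and `Q_y = bra y` as elements of `Module.End F P`,
and `x^k ∘ y = (P_x)^k y` (with the convention `x^0 ∘ y = y`);
binomial coefficients are regarded as elements of `F`. -/
theorem tpa_binomial_operator_identities {F P : Type*} [Field F] (hchar : (2 : F) ≠ 0)
    [AddCommGroup P] [Module F P]
    (mul bra : P →ₗ[F] P →ₗ[F] P)
    (hcomm : ∀ x y : P, mul x y = mul y x)
    (hassoc : ∀ x y z : P, mul (mul x y) z = mul x (mul y z))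
    (halt : ∀ x : P, bra x x = 0)
    (hjac : ∀ x y z : P, bra x (bra y z) + bra y (bra z x) + bra z (bra x y) = 0)
    (hleib : ∀ x y z : P, (2 : F) • mul x (bra y z) = bra (mul x y) z + bra y (mul x z)) :
    ∀ (x y : P) (k s : ℕ), 1 ≤ s → s ≤ k →
      (Even s →
        (((2 * k).choose s : F) •
            ((bra (((mul x : Module.End F P) ^ (k - s / 2)) y) : Module.End F P)
              * (mul x : Module.End F P) ^ (k - s / 2)))
          - ∑ j ∈ range (s + 1),
              ((k.choose j : F) * (k.choose (s - j) : F)) •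
                ((bra (((mul x : Module.End F P) ^ (k - j)) y) : Module.End F P)
                  * (mul x : Module.End F P) ^ (k - s + j)) = 0)
      ∧ (Odd s →
        (((2 * k).choose s : F) •
            ((bra (((mul x : Module.End F P) ^ (k - (s + 1) / 2)) y) : Module.End F P)
              * (mul x : Module.End F P) ^ (k - (s - 1) / 2)))
          + (((2 * k).choose s : F) •
              ((bra (((mul x : Module.End F P) ^ (k - (s - 1) / 2)) y) : Module.End F P)
                * (mul x : Module.End F P) ^ (k - (s + 1) / 2)))
          - (2 : F) • ∑ j ∈ range (s + 1),
              ((k.choose j : F) * (k.choose (s - j) : F)) •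
                ((bra (((mul x : Module.End F P) ^ (k - j)) y) : Module.End F P)
                  * (mul x : Module.End F P) ^ (k - s + j)) = 0) := by
  intro x y k s hs1 hsk
  -- key multiplicative identity: [x∘v, x∘z] = x²∘[v,z]
  have hE : ∀ v z : P, bra (mul x v) (mul x z) = mul x (mul x (bra v z)) := by
    intro v z
    have h2 := hleib x (mul x v) z
    have h3 := hleib x v (mul x z)
    have h4 := hleib (mul x x) v z
    rw [hassoc x x (bra v z), hassoc x x v, hassoc x x z] at h4
    have h1 := congrArg (fun w => mul x w) (hleib x v z)
    simp only [map_smul, map_add] at h1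
    have h5 : (2 : F) • bra (mul x v) (mul x z) = (2 : F) • mul x (mul x (bra v z)) := by
      linear_combination (norm := module) h4 - h2 - h3 - (2 : F) • h1
    have h6 := congrArg (fun w => (2 : F)⁻¹ • w) h5
    simpa [smul_smul, inv_mul_cancel₀ hchar] using h6
  set Px : Module.End F P := (mul x : P →ₗ[F] P) with hPxdef
  -- operator recursion
  have hrec : ∀ m : ℕ, (bra ((Px ^ (m + 2)) y) : Module.End F P)
      = (2 : F) • ((bra ((Px ^ (m + 1)) y) : Module.End F P) * Px)
        - (bra ((Px ^ m) y) : Module.End F P) * Px ^ 2 := by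
    intro m
    apply LinearMap.ext; intro z
    have e1 : (Px ^ (m + 2)) y = mul x (mul x ((Px ^ m) y)) := by
      rw [pow_succ', pow_succ']; rfl
    have e2 : (Px ^ (m + 1)) y = mul x ((Px ^ m) y) := by rw [pow_succ']; rfl
    have e3 : (Px ^ 2) z = mul x (mul x z) := by rw [pow_succ', pow_one]; rfl
    set v := (Px ^ m) y with hv
    have h4 := hleib (mul x x) v z
    rw [hassoc x x (bra v z), hassoc x x v, hassoc x x z] at h4
    simp only [LinearMap.sub_apply, LinearMap.smul_apply, Module.End.mul_apply, e1, e2, e3]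
    rw [show Px z = mul x z from rfl, hE v z]
    linear_combination (norm := module) -h4
  set Bop : Module.End F P :=
    (bra (mul x y) : Module.End F P) - (bra y : Module.End F P) * Px with hBop
  have hQ1 : (bra ((Px ^ 1) y) : Module.End F P) = (bra y : Module.End F P) * Px + Bop := by
    rw [pow_one, hBop, show Px y = mul x y from rfl]
    abel
  have hB : ∀ m : ℕ, (bra ((Px ^ (m + 1)) y) : Module.End F P)
      = (bra ((Px ^ m) y) : Module.End F P) * Px + Bop * Px ^ m := by
    intro m
    induction m with
    | zero => simpa using hQ1
    | succ n ih =>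
      rw [hrec n, ih]
      rw [show ((bra ((Px ^ n) y) : Module.End F P) * Px + Bop * Px ^ n) * Px
          = (bra ((Px ^ n) y) : Module.End F P) * Px ^ 2 + Bop * Px ^ (n + 1) by
        rw [add_mul, mul_assoc, mul_assoc, ← pow_succ, ← pow_two]]
      module
  -- closed form
  have hC : ∀ m : ℕ, (bra ((Px ^ (m + 1)) y) : Module.End F P)
      = (bra y : Module.End F P) * Px ^ (m + 1) + ((m + 1 : ℕ) : F) • (Bop * Px ^ m) := by
    intro m
    induction m with
    | zero => simpa using hQ1
    | succ n ih =>
      rw [hB (n + 1), ih, add_mul, mul_assoc, ← pow_succ, smul_mul_assoc, mul_assoc, ← pow_succ]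
      push_cast
      module
  -- master formula
  have hQP : ∀ m r : ℕ, m + r = 2 * k - s →
      (bra ((Px ^ m) y) : Module.End F P) * Px ^ r
        = (bra y : Module.End F P) * Px ^ (2 * k - s)
          + (m : F) • (Bop * Px ^ (2 * k - s - 1)) := by
    intro m r hmr
    cases m with
    | zero =>
      obtain rfl : r = 2 * k - s := by omega
      simp
    | succ n =>
      rw [hC n, add_mul, smul_mul_assoc, mul_assoc, ← pow_add, mul_assoc, ← pow_add,
        show n + 1 + r = 2 * k - s by omega, show n + r = 2 * k - s - 1 by omega]
  -- the sum
  have hsum : ∑ j ∈ range (s + 1),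
      ((k.choose j : F) * (k.choose (s - j) : F)) •
        ((bra ((Px ^ (k - j)) y) : Module.End F P) * Px ^ (k - s + j))
      = (((2 * k).choose s : F)) • ((bra y : Module.End F P) * Px ^ (2 * k - s))
        + ((∑ j ∈ range (s + 1), k.choose j * k.choose (s - j) * (k - j) : ℕ) : F) •
            (Bop * Px ^ (2 * k - s - 1)) := by
    have hterm : ∀ j ∈ range (s + 1),
        ((k.choose j : F) * (k.choose (s - j) : F)) •
          ((bra ((Px ^ (k - j)) y) : Module.End F P) * Px ^ (k - s + j))
        = ((k.choose j * k.choose (s - j) : ℕ) : F) •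
            ((bra y : Module.End F P) * Px ^ (2 * k - s))
          + ((k.choose j * k.choose (s - j) * (k - j) : ℕ) : F) •
              (Bop * Px ^ (2 * k - s - 1)) := by
      intro j hj
      have hj' : j ≤ s := by simpa [Nat.lt_succ_iff] using hj
      rw [hQP (k - j) (k - s + j) (by omega), smul_add, smul_smul]
      push_cast
      module
    rw [Finset.sum_congr rfl hterm, Finset.sum_add_distrib, ← Finset.sum_smul, ← Finset.sum_smul,
      ← Nat.cast_sum, ← Nat.cast_sum, tpa_vandermonde]
  constructor
  · -- even case
    intro hev
    have hp : s % 2 = 0 := Nat.even_iff.mp hev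
    rw [hQP (k - s / 2) (k - s / 2) (by omega), hsum]
    have hnat : (2 * k).choose s * (k - s / 2)
        = ∑ j ∈ range (s + 1), k.choose j * k.choose (s - j) * (k - j) := by
      have h2 := tpa_sum2 k s hsk
      have e : 2 * (k - s / 2) = 2 * k - s := by omega
      have h3 : 2 * ((2 * k).choose s * (k - s / 2))
          = 2 * ∑ j ∈ range (s + 1), k.choose j * k.choose (s - j) * (k - j) := by
        rw [h2, ← e]; ring
      omega
    have hF : ((2 * k).choose s : F) * ((k - s / 2 : ℕ) : F)
        = ((∑ j ∈ range (s + 1), k.choose j * k.choose (s - j) * (k - j) : ℕ) : F) := by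
      exact_mod_cast congrArg (Nat.cast : ℕ → F) hnat
    have hFs := congrArg (fun c : F => c • (Bop * Px ^ (2 * k - s - 1))) hF
    linear_combination (norm := module) hFs
  · -- odd case
    intro hod
    have hp : s % 2 = 1 := Nat.odd_iff.mp hod
    rw [hQP (k - (s + 1) / 2) (k - (s - 1) / 2) (by omega),
      hQP (k - (s - 1) / 2) (k - (s + 1) / 2) (by omega), hsum]
    have hnat : (2 * k).choose s * (k - (s + 1) / 2) + (2 * k).choose s * (k - (s - 1) / 2)
        = 2 * ∑ j ∈ range (s + 1), k.choose j * k.choose (s - j) * (k - j) := by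
      have h2 := tpa_sum2 k s hsk
      have e : (k - (s + 1) / 2) + (k - (s - 1) / 2) = 2 * k - s := by omega
      have h3 : (2 * k).choose s * (k - (s + 1) / 2) + (2 * k).choose s * (k - (s - 1) / 2)
          = (2 * k - s) * (2 * k).choose s := by rw [← e]; ring
      omega
    have hF : ((2 * k).choose s : F) * ((k - (s + 1) / 2 : ℕ) : F)
          + ((2 * k).choose s : F) * ((k - (s - 1) / 2 : ℕ) : F)
        = 2 * ((∑ j ∈ range (s + 1), k.choose j * k.choose (s - j) * (k - j) : ℕ) : F) := by
      exact_mod_cast congrArg (Nat.cast : ℕ → F) hnat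
    have hFs := congrArg (fun c : F => c • (Bop * Px ^ (2 * k - s - 1))) hF
    linear_combination (norm := module) hFs
end

section
/- Let (P, ∘, [·,·]) be a transposed Poisson algebra over a field F of characteristic different from 2. Then for every a ∈ P and every λ ∈ F, the generalized eigenspace P_{a,λ} = { x ∈ P : (P_a − λ·id)^k x = 0 for some k > 0 } of the operator P_a is an ideal of the transposed Poisson algebra P. -/
section Aux

variable {F P : Type*} [Field F] [AddCommGroup P] [Module F P]

private lemma endPow_succ_apply (f : Module.End F P) (k : ℕ) (v : P) :
    (f ^ (k + 1)) v = (f ^ k) (f v) := by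
  rw [pow_succ, Module.End.mul_apply]

private lemma endPow_succ_apply' (f : Module.End F P) (k : ℕ) (v : P) :
    (f ^ (k + 1)) v = f ((f ^ k) v) := by
  rw [pow_succ', Module.End.mul_apply]

private lemma endPow_ker_mono (f : Module.End F P) {k m : ℕ} (h : k ≤ m) {x : P}
    (hx : (f ^ k) x = 0) : (f ^ m) x = 0 := by
  have h2 : (f ^ (m - k) * f ^ k) x = 0 := by
    rw [Module.End.mul_apply, hx, map_zero]
  rwa [← pow_add, Nat.sub_add_cancel h] at h2

variable (mul bra : P →ₗ[F] P →ₗ[F] P)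

private lemma tpa_skew (halt : ∀ x : P, bra x x = 0) (x y : P) :
    bra x y = -bra y x := by
  have h := halt (x + y)
  simp only [map_add, LinearMap.add_apply, halt x, halt y, zero_add, add_zero] at h
  exact eq_neg_of_add_eq_zero_right h

private lemma tpa_cyclic (hchar : (2:F) ≠ 0)
    (hcomm : ∀ x y : P, mul x y = mul y x)
    (halt : ∀ x : P, bra x x = 0)
    (hleib : ∀ x y z : P, (2:F) • mul x (bra y z) = bra (mul x y) z + bra y (mul x z))
    (x y z : P) :
    mul x (bra y z) + mul y (bra z x) + mul z (bra x y) = 0 := by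
  have h : (2:F) • (mul x (bra y z) + mul y (bra z x) + mul z (bra x y)) = 0 := by
    rw [smul_add, smul_add, hleib x y z, hleib y z x, hleib z x y,
        hcomm y x, hcomm z y, hcomm z x,
        tpa_skew bra halt z (mul x y), tpa_skew bra halt x (mul y z),
        tpa_skew bra halt y (mul x z)]
    abel
  exact (smul_eq_zero.mp h).resolve_left hchar

/-- Key identity A: `a∘(a∘[a,z]) = 2 a∘[a, a∘z] - [a, a∘(a∘z)]`. -/
private lemma tpa_keyA (hchar : (2:F) ≠ 0)
    (hassoc : ∀ x y z : P, mul (mul x y) z = mul x (mul y z))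
    (hleib : ∀ x y z : P, (2:F) • mul x (bra y z) = bra (mul x y) z + bra y (mul x z))
    (a z : P) :
    mul a (mul a (bra a z)) =
      (2:F) • mul a (bra a (mul a z)) - bra a (mul a (mul a z)) := by
  have e1 : bra (mul a a) z = (2:F) • mul a (bra a z) - bra a (mul a z) := by
    linear_combination (norm := module) -hleib a a z
  have e5 : mul a (bra (mul a a) z)
      = (2:F) • mul a (mul a (bra a z)) - mul a (bra a (mul a z)) := by
    rw [e1, map_sub, map_smul]
  have e2 := hleib a a (mul a z)
  have e3 := hleib (mul a a) a z
  simp only [hassoc] at e3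
  have e4 := hleib a (mul a a) z
  have hh : (2:F) • mul a (mul a (bra a z)) =
      (2:F) • ((2:F) • mul a (bra a (mul a z)) - bra a (mul a (mul a z))) := by
    linear_combination (norm := module) (-1 : F) • e2 - e3 + e4 - (2:F) • e5
  exact smul_right_injective P hchar hh

/-- Key identity B: `a∘[y,z] = y∘[a,z] + [y, a∘z] - [a, z∘y] + z∘[a,y]`. -/
private lemma tpa_keyB (hchar : (2:F) ≠ 0)
    (hcomm : ∀ x y : P, mul x y = mul y x)
    (halt : ∀ x : P, bra x x = 0)
    (hleib : ∀ x y z : P, (2:F) • mul x (bra y z) = bra (mul x y) z + bra y (mul x z))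
    (a y z : P) :
    mul a (bra y z) =
      mul y (bra a z) + bra y (mul a z) - bra a (mul z y) + mul z (bra a y) := by
  have h1 := tpa_cyclic mul bra hchar hcomm halt hleib a y z
  rw [tpa_skew bra halt z a, map_neg] at h1
  have h2 := hleib z a y
  rw [hcomm z a, tpa_skew bra halt (mul a z) y] at h2
  linear_combination (norm := module) h1 - h2

end Aux

section DSection

variable {F P : Type*} [Field F] [AddCommGroup P] [Module F P]
variable (mul bra : P →ₗ[F] P →ₗ[F] P) (a : P) (lam : F)

local notation "D" => ((mul a : Module.End F P) - lam • (1 : Module.End F P))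

private lemma tpa_D_apply (x : P) : D x = mul a x - lam • x := by
  simp [LinearMap.sub_apply, LinearMap.smul_apply, Module.End.one_apply]

private lemma tpa_D_mul (hcomm : ∀ x y : P, mul x y = mul y x)
    (hassoc : ∀ x y z : P, mul (mul x y) z = mul x (mul y z)) (y x : P) :
    D (mul y x) = mul y (D x) := by
  simp only [tpa_D_apply, map_sub, map_smul]
  rw [← hassoc a y x, hcomm a y, hassoc y a x]

private lemma tpa_pow_mul (hcomm : ∀ x y : P, mul x y = mul y x)
    (hassoc : ∀ x y z : P, mul (mul x y) z = mul x (mul y z)) (k : ℕ) (y x : P) :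
    (D ^ k) (mul y x) = mul y ((D ^ k) x) := by
  induction k generalizing x with
  | zero => simp [pow_zero, Module.End.one_apply]
  | succ n ih =>
      rw [endPow_succ_apply, tpa_D_mul mul a lam hcomm hassoc, ih,
        ← endPow_succ_apply]

/-- `D² [a,z] = 2 D [a, Dz] - [a, D² z]`. -/
private lemma tpa_f3 (hchar : (2:F) ≠ 0)
    (hassoc : ∀ x y z : P, mul (mul x y) z = mul x (mul y z))
    (hleib : ∀ x y z : P, (2:F) • mul x (bra y z) = bra (mul x y) z + bra y (mul x z))
    (z : P) :
    D (D (bra a z)) = (2:F) • D (bra a (D z)) - bra a (D (D z)) := by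
  simp only [tpa_D_apply, map_sub, map_smul, smul_sub, smul_add]
  linear_combination (norm := module) tpa_keyA mul bra hchar hassoc hleib a z

/-- `D [y,z] = y∘[a,z] + [y, Dz] - [a, z∘y] + z∘[a,y]`. -/
private lemma tpa_f4 (hchar : (2:F) ≠ 0)
    (hcomm : ∀ x y : P, mul x y = mul y x)
    (halt : ∀ x : P, bra x x = 0)
    (hleib : ∀ x y z : P, (2:F) • mul x (bra y z) = bra (mul x y) z + bra y (mul x z))
    (y z : P) :
    D (bra y z) = mul y (bra a z) + bra y (D z) - bra a (mul z y) + mul z (bra a y) := by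
  simp only [tpa_D_apply, map_sub, map_smul, smul_sub, smul_add]
  linear_combination (norm := module) tpa_keyB mul bra hchar hcomm halt hleib a y z

/-- `z ∈ ker Dⁿ → [a,z]` is killed by a power of `D`. -/
private lemma tpa_C2 (hchar : (2:F) ≠ 0)
    (hassoc : ∀ x y z : P, mul (mul x y) z = mul x (mul y z))
    (hleib : ∀ x y z : P, (2:F) • mul x (bra y z) = bra (mul x y) z + bra y (mul x z)) :
    ∀ n : ℕ, ∀ z : P, (D ^ n) z = 0 → ∃ k : ℕ, (D ^ k) (bra a z) = 0 := by
  intro n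
  induction n with
  | zero =>
      intro z hz
      rw [pow_zero, Module.End.one_apply] at hz
      exact ⟨0, by rw [pow_zero, Module.End.one_apply, hz, map_zero]⟩
  | succ n ih =>
      intro z hz
      have h1 : (D ^ n) (D z) = 0 := by rw [← endPow_succ_apply]; exact hz
      have h2 : (D ^ n) (D (D z)) = 0 := by
        rw [← endPow_succ_apply, ← endPow_succ_apply, endPow_succ_apply', hz, map_zero]
      obtain ⟨k1, hk1⟩ := ih (D z) h1
      obtain ⟨k2, hk2⟩ := ih (D (D z)) h2
      refine ⟨max k1 k2 + 2, ?_⟩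
      have hk1' : (D ^ (max k1 k2 + 1)) (bra a (D z)) = 0 :=
        endPow_ker_mono _ (le_trans (le_max_left _ _) (Nat.le_succ _)) hk1
      have hk2' : (D ^ max k1 k2) (bra a (D (D z))) = 0 :=
        endPow_ker_mono _ (le_max_right _ _) hk2
      rw [endPow_succ_apply, endPow_succ_apply,
        tpa_f3 mul bra a lam hchar hassoc hleib z, map_sub, map_smul,
        ← endPow_succ_apply, hk1', hk2', smul_zero, sub_zero]

/-- Main induction: `z ∈ ker Dⁿ → [y,z]` is killed by a power of `D`, any `y`. -/
private lemma tpa_S (hchar : (2:F) ≠ 0)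
    (hcomm : ∀ x y : P, mul x y = mul y x)
    (hassoc : ∀ x y z : P, mul (mul x y) z = mul x (mul y z))
    (halt : ∀ x : P, bra x x = 0)
    (hleib : ∀ x y z : P, (2:F) • mul x (bra y z) = bra (mul x y) z + bra y (mul x z)) :
    ∀ n : ℕ, ∀ z : P, (D ^ n) z = 0 → ∀ y : P, ∃ k : ℕ, (D ^ k) (bra y z) = 0 := by
  intro n
  induction n with
  | zero =>
      intro z hz y
      rw [pow_zero, Module.End.one_apply] at hz
      exact ⟨0, by rw [pow_zero, Module.End.one_apply, hz, map_zero]⟩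
  | succ n ih =>
      intro z hz y
      have h1 : (D ^ n) (D z) = 0 := by rw [← endPow_succ_apply]; exact hz
      obtain ⟨k1, hk1⟩ := tpa_C2 mul bra a lam hchar hassoc hleib (n+1) z hz
      obtain ⟨k2, hk2⟩ := ih (D z) h1 y
      have hzy : (D ^ (n+1)) (mul z y) = 0 := by
        rw [hcomm z y, tpa_pow_mul mul a lam hcomm hassoc, hz, map_zero]
      obtain ⟨k3, hk3⟩ := tpa_C2 mul bra a lam hchar hassoc hleib (n+1) (mul z y) hzy
      have h4 : (D ^ (n+1)) (mul z (bra a y)) = 0 := by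
        rw [hcomm z (bra a y), tpa_pow_mul mul a lam hcomm hassoc, hz, map_zero]
      refine ⟨max (max k1 k2) (max k3 (n+1)) + 1, ?_⟩
      have e1 : (D ^ max (max k1 k2) (max k3 (n+1))) (mul y (bra a z)) = 0 := by
        rw [tpa_pow_mul mul a lam hcomm hassoc,
          endPow_ker_mono _ (le_trans (le_max_left k1 k2) (le_max_left _ _)) hk1,
          map_zero]
      have e2 : (D ^ max (max k1 k2) (max k3 (n+1))) (bra y (D z)) = 0 :=
        endPow_ker_mono _ (le_trans (le_max_right k1 k2) (le_max_left _ _)) hk2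
      have e3 : (D ^ max (max k1 k2) (max k3 (n+1))) (bra a (mul z y)) = 0 :=
        endPow_ker_mono _ (le_trans (le_max_left k3 (n+1)) (le_max_right _ _)) hk3
      have e4 : (D ^ max (max k1 k2) (max k3 (n+1))) (mul z (bra a y)) = 0 :=
        endPow_ker_mono _ (le_trans (le_max_right k3 (n+1)) (le_max_right _ _)) h4
      rw [endPow_succ_apply, tpa_f4 mul bra a lam hchar hcomm halt hleib y z]
      simp only [map_add, map_sub]
      rw [e1, e2, e3, e4]
      abel

end DSection

/-- In a transposed Poisson algebra `(P, ∘, [·,·])` over a field of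
characteristic different from two, for every `a ∈ P` and `λ ∈ F` the generalized
eigenspace `{x : ∃ k > 0, (P_a - λ·id)^k x = 0}` of the operator `P_a = mul a`
is an ideal of the transposed Poisson algebra. -/
theorem tpa_generalized_eigenspace_is_ideal {F P : Type*} [Field F] (hchar : (2 : F) ≠ 0)
    [AddCommGroup P] [Module F P]
    (mul bra : P →ₗ[F] P →ₗ[F] P)
    (hcomm : ∀ x y : P, mul x y = mul y x)
    (hassoc : ∀ x y z : P, mul (mul x y) z = mul x (mul y z))
    (halt : ∀ x : P, bra x x = 0)
    (hjac : ∀ x y z : P, bra x (bra y z) + bra y (bra z x) + bra z (bra x y) = 0)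
    (hleib : ∀ x y z : P, (2 : F) • mul x (bra y z) = bra (mul x y) z + bra y (mul x z)) :
    ∀ (a : P) (lam : F), ∃ I : Submodule F P,
      (I : Set P) =
        {x : P | ∃ k : ℕ, 0 < k ∧
          (((mul a : Module.End F P) - lam • (1 : Module.End F P)) ^ k) x = 0}
      ∧ (∀ y : P, ∀ x ∈ I, mul y x ∈ I)
      ∧ (∀ y : P, ∀ x ∈ I, bra y x ∈ I) := by
  intro a lam
  refine ⟨{ carrier := {x : P | ∃ k : ℕ, 0 < k ∧
              (((mul a : Module.End F P) - lam • (1 : Module.End F P)) ^ k) x = 0}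
            add_mem' := ?_
            zero_mem' := ?_
            smul_mem' := ?_ }, rfl, ?_, ?_⟩
  · rintro x y ⟨k1, hk1, h1⟩ ⟨k2, hk2, h2⟩
    refine ⟨max k1 k2, lt_of_lt_of_le hk1 (le_max_left _ _), ?_⟩
    rw [map_add, endPow_ker_mono _ (le_max_left k1 k2) h1,
      endPow_ker_mono _ (le_max_right k1 k2) h2, add_zero]
  · exact ⟨1, one_pos, by rw [map_zero]⟩
  · rintro c x ⟨k, hk, h⟩
    exact ⟨k, hk, by rw [map_smul, h, smul_zero]⟩
  · rintro y x ⟨k, hk, h⟩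
    exact ⟨k, hk, by rw [tpa_pow_mul mul a lam hcomm hassoc, h, map_zero]⟩
  · rintro y x ⟨k, hk, h⟩
    obtain ⟨m, hm⟩ := tpa_S mul bra a lam hchar hcomm hassoc halt hleib k x h y
    exact ⟨m + 1, Nat.succ_pos m, endPow_ker_mono _ (Nat.le_succ m) hm⟩
end

section
/- Let (A, ∘) be an associative commutative algebra of finite dimension n over a field F. If for every x ∈ A the characteristic polynomial of the left multiplication operator P_x is (t − λ_x)^n for some scalar λ_x ∈ F, then (A, ∘) is either nilpotent or unital. -/
/-- Left-nested product `(...((a ∘ b₁) ∘ b₂) ∘ ...) ∘ bₘ` of an element with a list,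
with respect to a bilinear multiplication `mul`. For an associative commutative
multiplication this computes the product of the `m+1` elements `a, b₁, …, bₘ`. -/
def nprod {F A : Type*} [Field F] [AddCommGroup A] [Module F A]
    (mul : A →ₗ[F] A →ₗ[F] A) : A → List A → A
  | a, [] => a
  | a, b :: l => nprod mul (mul a b) l

/-!
If every multiplication operator `P_x` is nilpotent, the `P_x` form a commuting family of
nilpotent operators, and each one strictly shrinks every nonzero subspace invariant under the
family; so the range of a product of `n = dim A` of them is zero and all products of `n + 1`
elements of `A` vanish. Otherwise some `P_x` has `λ_x ≠ 0`, and by Cayley–Hamilton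
`P_x = λ_x + (nilpotent)` is invertible; if `x ∘ e = x`, associativity and injectivity of `P_x`
give `e ∘ y = y` for all `y`.
-/

open Module

namespace Module.End

variable {K V : Type*} [Field K] [AddCommGroup V] [Module K V]

theorem eq_bot_of_map_eq_self_of_isNilpotent {f : End K V} (hf : IsNilpotent f)
    {W : Submodule K V} (hW : W.map f = W) : W = ⊥ := by
  obtain ⟨k, hk⟩ := hf
  have hpow : ∀ m : ℕ, W.map (f ^ m) = W := by
    intro m
    induction m with
    | zero => rw [pow_zero, one_eq_id, Submodule.map_id]
    | succ m ih => rw [pow_succ, mul_eq_comp, Submodule.map_comp, hW, ih]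
  rw [← hpow k, hk, Submodule.map_zero]

theorem finrank_range_list_prod_le [FiniteDimensional K V] (l : List (End K V))
    (hnil : ∀ f ∈ l, IsNilpotent f) (hcomm : l.Pairwise Commute) :
    finrank K (LinearMap.range l.prod) ≤ finrank K V - l.length := by
  induction l with
  | nil => simpa only [List.length_nil, Nat.sub_zero] using Submodule.finrank_le _
  | cons f l ih =>
    rw [List.pairwise_cons] at hcomm
    have hle := ih (fun g hg => hnil g (List.mem_cons_of_mem f hg)) hcomm.2
    set W := LinearMap.range l.prod
    have hrange : LinearMap.range (f :: l).prod = W.map f := by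
      rw [List.prod_cons, mul_eq_comp, LinearMap.range_comp]
    rcases eq_or_ne W ⊥ with hW | hW
    · rw [hrange, hW, Submodule.map_bot, finrank_bot]
      exact Nat.zero_le _
    have hinv : W.map f ≤ W := by
      rintro _ ⟨_, ⟨v, rfl⟩, rfl⟩
      refine ⟨f v, ?_⟩
      simpa only [mul_apply] using
        (LinearMap.congr_fun (Commute.list_prod_right l f hcomm.1).eq v).symm
    have hlt : W.map f < W := lt_of_le_of_ne hinv fun h =>
      hW (eq_bot_of_map_eq_self_of_isNilpotent (hnil f List.mem_cons_self) h)
    have := Submodule.finrank_lt_finrank_of_lt hlt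
    rw [hrange, List.length_cons]
    omega

theorem list_prod_eq_zero_of_isNilpotent [FiniteDimensional K V] (l : List (End K V))
    (hnil : ∀ f ∈ l, IsNilpotent f) (hcomm : l.Pairwise Commute)
    (hlen : finrank K V ≤ l.length) : l.prod = 0 := by
  have := finrank_range_list_prod_le l hnil hcomm
  rwa [Nat.sub_eq_zero_of_le hlen, Nat.le_zero, Submodule.finrank_eq_zero,
    LinearMap.range_eq_bot] at this

open Polynomial in
theorem isNilpotent_or_isUnit_of_charpoly_eq_X_sub_C_pow [FiniteDimensional K V]
    {f : End K V} {μ : K} (h : f.charpoly = (X - C μ) ^ finrank K V) :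
    IsNilpotent f ∨ IsUnit f := by
  have hN : IsNilpotent (f - algebraMap K (End K V) μ) :=
    ⟨finrank K V, by simpa [h] using f.aeval_self_charpoly⟩
  rcases eq_or_ne μ 0 with rfl | hμ
  · left
    simpa using hN
  · right
    simpa using hN.isUnit_add_left_of_commute
      ((isUnit_iff_ne_zero.mpr hμ).map (algebraMap K (End K V)))
      ((Algebra.commute_algebraMap_right μ f).sub_left (Commute.refl _))

end Module.End

section BilinearMultiplication

variable {F A : Type*} [Field F] [AddCommGroup A] [Module F A] (mul : A →ₗ[F] A →ₗ[F] A)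

theorem nprod_eq_reverse_map_flip_prod_apply (a : A) (l : List A) :
    nprod mul a l = (l.map mul.flip).reverse.prod a := by
  induction l generalizing a with
  | nil => rfl
  | cons b l ih => simp [nprod, ih, List.prod_append]

theorem commute_mul_of_comm_of_assoc (hcomm : ∀ x y : A, mul x y = mul y x)
    (hassoc : ∀ x y z : A, mul (mul x y) z = mul x (mul y z)) (x y : A) :
    Commute (mul x) (mul y) :=
  LinearMap.ext fun z => by
    simp only [End.mul_apply, ← hassoc, hcomm x y]

theorem nprod_eq_zero_of_isNilpotent [FiniteDimensional F A]
    (hcomm : ∀ x y : A, mul x y = mul y x)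
    (hassoc : ∀ x y z : A, mul (mul x y) z = mul x (mul y z))
    (hnil : ∀ x : A, IsNilpotent (mul x)) (a : A) {l : List A} (hl : finrank F A ≤ l.length) :
    nprod mul a l = 0 := by
  have hflip : mul.flip = mul := LinearMap.ext₂ fun x y => hcomm y x
  have hprod : (l.map mul).reverse.prod = 0 :=
    End.list_prod_eq_zero_of_isNilpotent _ (by simpa using fun x _ => hnil x)
      (List.pairwise_reverse.mpr <| List.pairwise_map.mpr <| List.pairwise_of_forall
        fun x y => commute_mul_of_comm_of_assoc mul hcomm hassoc y x)
      (by simpa using hl)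
  rw [nprod_eq_reverse_map_flip_prod_apply, hflip, hprod, LinearMap.zero_apply]

theorem exists_mul_left_eq_self_of_bijective
    (hassoc : ∀ x y z : A, mul (mul x y) z = mul x (mul y z)) {x : A}
    (hx : Function.Bijective (mul x)) : ∃ e : A, ∀ y : A, mul e y = y := by
  obtain ⟨e, he⟩ := hx.surjective x
  exact ⟨e, fun y => hx.injective (by rw [← hassoc, he])⟩

end BilinearMultiplication

open Polynomial in
/-- If `(A, ∘)` is an `n`-dimensional associative commutative algebra
over a field `F` such that for every `x` the characteristic polynomial of the left
multiplication operator `P_x` is `(t - λ_x)^n`, then `A` is nilpotent or unital. -/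
theorem assoc_comm_charpoly_nilpotent_or_unital {F A : Type*} [Field F]
    [AddCommGroup A] [Module F A] [FiniteDimensional F A]
    (mul : A →ₗ[F] A →ₗ[F] A)
    (hcomm : ∀ x y : A, mul x y = mul y x)
    (hassoc : ∀ x y z : A, mul (mul x y) z = mul x (mul y z))
    (hchar : ∀ x : A, ∃ lam : F,
      LinearMap.charpoly (mul x) = (X - C lam) ^ (Module.finrank F A)) :
    (∃ k : ℕ, 1 ≤ k ∧ ∀ (a : A) (l : List A), l.length + 1 = k → nprod mul a l = 0)
    ∨ (∃ e : A, ∀ x : A, mul e x = x) := by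
  by_cases hnil : ∀ x : A, IsNilpotent (mul x)
  · exact Or.inl ⟨finrank F A + 1, by omega, fun a l hl =>
      nprod_eq_zero_of_isNilpotent mul hcomm hassoc hnil a (by omega)⟩
  · push Not at hnil
    obtain ⟨x, hx⟩ := hnil
    obtain ⟨μ, hμ⟩ := hchar x
    have hunit := (End.isNilpotent_or_isUnit_of_charpoly_eq_X_sub_C_pow hμ).resolve_left hx
    exact Or.inr (exists_mul_left_eq_self_of_bijective mul hassoc ((End.isUnit_iff _).mp hunit))
end

section
/- Let (P, ∘, [·,·]) be a transposed Poisson algebra of finite dimension n over an algebraically closed field F of characteristic different from 2. If the Lie algebra (P, [·,·]) is directly indecomposable, then for every x ∈ P the characteristic polynomial of the operator P_x is (t − λ_x)^n for some scalar λ_x ∈ F. -/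
/-!
Every `P_x` is a ½-derivation of the Lie bracket, `2 T[z, w] = [Tz, w] + [z, Tw]`, and by
associativity so is `P_x ∘ P_x = P_{x ∘ x}`. For a ½-derivation `T` the bracket maps
`V_α × V_α` into the generalized eigenspace `V_α`; when `T²` is one too, the two identities
combine to `[T²z, w] + [z, T²w] = 2 [Tz, Tw]`, i.e. the bracket kills `(T ⊗ 1 - 1 ⊗ T)²`,
which is invertible on `V_α ⊗ V_β` for `α ≠ β`, so `[V_α, V_β] = 0`. Hence every `V_α` is a
Lie ideal, `V_μ` and the sum of the other generalized eigenspaces decompose `P`, and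
indecomposability leaves `P_x` a single eigenvalue.
-/

open Polynomial Module End

lemma Module.End.exists_charpoly_eq_X_sub_C_pow {K V : Type*} [Field K] [IsAlgClosed K]
    [AddCommGroup V] [Module K V] [FiniteDimensional K V] (f : End K V)
    (h : ∀ μ ν, f.HasEigenvalue μ → f.HasEigenvalue ν → μ = ν) :
    ∃ c, f.charpoly = (X - C c) ^ finrank K V := by
  have hroot : ∀ μ ∈ f.charpoly.roots, f.HasEigenvalue μ := fun μ hμ =>
    (hasEigenvalue_iff_isRoot_charpoly f μ).mpr (mem_roots f.charpoly_monic.ne_zero |>.mp hμ)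
  obtain ⟨c, hc⟩ : ∃ c, ∀ μ ∈ f.charpoly.roots, μ = c := by
    rcases f.charpoly.roots.empty_or_exists_mem with h0 | ⟨c, hc⟩
    · exact ⟨0, by simp [h0]⟩
    · exact ⟨c, fun μ hμ => h μ c (hroot μ hμ) (hroot c hc)⟩
  refine ⟨c, ?_⟩
  conv_lhs => rw [(IsAlgClosed.splits f.charpoly).eq_prod_roots_of_monic f.charpoly_monic,
    Multiset.eq_replicate_card.mpr hc]
  rw [Multiset.map_replicate, Multiset.prod_replicate, IsAlgClosed.card_roots_eq_natDegree,
    LinearMap.charpoly_natDegree]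

section HalfDerivation

variable {F P : Type*} [Field F] [AddCommGroup P] [Module F P]

def IsHalfDerivation (bra : P →ₗ[F] P →ₗ[F] P) (T : End F P) : Prop :=
  ∀ z w, (2 : F) • T (bra z w) = bra (T z) w + bra z (T w)

namespace IsHalfDerivation

variable {bra : P →ₗ[F] P →ₗ[F] P} {T : End F P}

lemma sub_smul_one (hT : IsHalfDerivation bra T) (α : F) :
    IsHalfDerivation bra (T - α • 1) := by
  intro z w
  simp only [LinearMap.sub_apply, LinearMap.smul_apply, Module.End.one_apply, map_sub, map_smul]
  linear_combination (norm := module) hT z w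

lemma pow_add_apply_eq_zero (h2 : (2 : F) ≠ 0) (hT : IsHalfDerivation bra T) {p q : ℕ}
    {z w : P} (hz : (T ^ p) z = 0) (hw : (T ^ q) w = 0) : (T ^ (p + q)) (bra z w) = 0 := by
  induction p generalizing z q w with
  | zero => simp_all
  | succ p ihp =>
    induction q generalizing w with
    | zero => simp_all
    | succ q ihq =>
      rw [pow_succ, Module.End.mul_apply] at hz hw
      have hTz : (T ^ (p + 1 + q)) (bra (T z) w) = 0 := by
        rw [Nat.add_right_comm]
        exact ihp hz (by rwa [pow_succ, Module.End.mul_apply])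
      refine (smul_eq_zero.mp ?_).resolve_left h2
      rw [← Nat.add_assoc, pow_succ, Module.End.mul_apply, ← map_smul, hT, map_add, hTz,
        ihq hw, add_zero]

lemma bra_mem_maxGenEigenspace (h2 : (2 : F) ≠ 0) (hT : IsHalfDerivation bra T) {α : F}
    {z w : P} (hz : z ∈ T.maxGenEigenspace α) (hw : w ∈ T.maxGenEigenspace α) :
    bra z w ∈ T.maxGenEigenspace α := by
  rw [mem_maxGenEigenspace] at hz hw ⊢
  obtain ⟨p, hp⟩ := hz
  obtain ⟨q, hq⟩ := hw
  exact ⟨p + q, (hT.sub_smul_one α).pow_add_apply_eq_zero h2 hp hq⟩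

lemma two_smul_bra_apply_apply (hT : IsHalfDerivation bra T) (hT2 : IsHalfDerivation bra (T * T))
    (z w : P) : (2 : F) • bra (T z) (T w) = bra (T (T z)) w + bra z (T (T w)) := by
  have h := congrArg T (hT z w)
  have h' := hT2 z w
  rw [map_smul, map_add] at h
  simp only [Module.End.mul_apply] at h'
  linear_combination (norm := module) (2 : F) • h' - (2 : F) • h - hT (T z) w - hT z (T w)

lemma bra_eq_zero_of_mem_maxGenEigenspace (hT : IsHalfDerivation bra T)
    (hT2 : IsHalfDerivation bra (T * T)) {α β : F} (hne : α ≠ β) {z w : P}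
    (hz : z ∈ T.maxGenEigenspace α) (hw : w ∈ T.maxGenEigenspace β) : bra z w = 0 := by
  rw [mem_maxGenEigenspace] at hz hw
  obtain ⟨p, hp⟩ := hz
  obtain ⟨q, hq⟩ := hw
  set A := T - α • 1
  set B := T - β • 1
  -- `bra` kills `(T ⊗ 1 - 1 ⊗ T)² = ((α - β) + (A ⊗ 1 - 1 ⊗ B))²`, and `A ⊗ 1 - 1 ⊗ B` is
  -- nilpotent on `z ⊗ w`.
  have expand : ∀ z w : P, (α - β) ^ 2 • bra z w =
      (2 : F) • bra (A z) (B w) - bra (A (A z)) w - bra z (B (B w))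
        + (2 * (β - α)) • bra (A z) w + (2 * (α - β)) • bra z (B w) := by
    intro z w
    simp only [A, B, LinearMap.sub_apply, LinearMap.smul_apply, Module.End.one_apply, map_sub,
      map_smul]
    linear_combination (norm := module) -hT.two_smul_bra_apply_apply hT2 z w
  have pow_succ_apply : ∀ (S : End F P) (k : ℕ) (v : P), S ((S ^ k) v) = (S ^ (k + 1)) v :=
    fun S k v => by rw [pow_succ', Module.End.mul_apply]
  have key : ∀ m i j : ℕ, p + q ≤ i + j + m → bra ((A ^ i) z) ((B ^ j) w) = 0 := by
    intro m
    induction m with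
    | zero =>
      intro i j hij
      rcases le_or_gt p i with hi | hi
      · rw [pow_map_zero_of_le hi hp, map_zero, LinearMap.zero_apply]
      · rw [pow_map_zero_of_le (by omega : q ≤ j) hq, map_zero]
    | succ m ih =>
      intro i j hij
      have h := expand ((A ^ i) z) ((B ^ j) w)
      rw [pow_succ_apply A i z, pow_succ_apply B j w, pow_succ_apply A (i + 1) z,
        pow_succ_apply B (j + 1) w, ih (i + 1) (j + 1) (by omega), ih (i + 2) j (by omega),
        ih i (j + 2) (by omega), ih (i + 1) j (by omega), ih i (j + 1) (by omega)] at h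
      simp only [smul_zero, sub_zero, add_zero] at h
      exact (smul_eq_zero.mp h).resolve_left (pow_ne_zero _ (sub_ne_zero.mpr hne))
  simpa using key (p + q) 0 0 (by omega)

variable [IsAlgClosed F] [FiniteDimensional F P]

lemma bra_mem_maxGenEigenspace_of_right_mem (h2 : (2 : F) ≠ 0) (hT : IsHalfDerivation bra T)
    (hT2 : IsHalfDerivation bra (T * T)) {κ : F} {v : P} (hv : v ∈ T.maxGenEigenspace κ)
    (y : P) : bra y v ∈ T.maxGenEigenspace κ := by
  have hle : ⊤ ≤ (T.maxGenEigenspace κ).comap (bra.flip v) := by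
    rw [← iSup_maxGenEigenspace_eq_top T]
    refine iSup_le fun σ u hu => ?_
    rcases eq_or_ne σ κ with rfl | hσ
    · exact hT.bra_mem_maxGenEigenspace h2 hu hv
    · simp [hT.bra_eq_zero_of_mem_maxGenEigenspace hT2 hσ hu hv]
  exact hle Submodule.mem_top

lemma eq_of_hasEigenvalue (h2 : (2 : F) ≠ 0) (hT : IsHalfDerivation bra T)
    (hT2 : IsHalfDerivation bra (T * T))
    (hind : ∀ I J : Submodule F P,
      (∀ y : P, ∀ x ∈ I, bra y x ∈ I) → (∀ y : P, ∀ x ∈ J, bra y x ∈ J) →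
      I ⊓ J = ⊥ → I ⊔ J = ⊤ → I = ⊥ ∨ J = ⊥)
    {μ ν : F} (hμ : T.HasEigenvalue μ) (hν : T.HasEigenvalue ν) : μ = ν := by
  by_contra hne
  let V := T.maxGenEigenspace
  have hV : ∀ κ, ∀ y : P, ∀ v ∈ V κ, bra y v ∈ V κ := fun κ y v hv =>
    hT.bra_mem_maxGenEigenspace_of_right_mem h2 hT2 hv y
  let J := ⨆ κ, ⨆ _ : κ ≠ μ, V κ
  have hVJ : ∀ κ, κ ≠ μ → V κ ≤ J := fun κ hκ => le_iSup₂ (f := fun κ (_ : κ ≠ μ) => V κ) κ hκ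
  have hJ : ∀ y : P, ∀ v ∈ J, bra y v ∈ J := fun y =>
    show J ≤ J.comap (bra y) from iSup₂_le fun κ hκ v hv => hVJ κ hκ (hV κ y v hv)
  have hsup : V μ ⊔ J = ⊤ := by rw [← iSup_split_single, iSup_maxGenEigenspace_eq_top]
  rcases hind (V μ) J (hV μ) hJ (disjoint_iff.mp (T.independent_maxGenEigenspace μ)) hsup
    with h | h
  · exact hasEigenvalue_iff.mp hμ (eq_bot_iff.mpr (eigenspace_le_maxGenEigenspace.trans h.le))
  · exact hasEigenvalue_iff.mp hν
      (eq_bot_iff.mpr (eigenspace_le_maxGenEigenspace.trans ((hVJ ν (Ne.symm hne)).trans h.le)))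

end IsHalfDerivation

end HalfDerivation

open Polynomial in
theorem tpa_indecomposable_charpoly_general {F P : Type*} [Field F] [IsAlgClosed F]
    (hchar : (2 : F) ≠ 0)
    [AddCommGroup P] [Module F P] [FiniteDimensional F P]
    (mul bra : P →ₗ[F] P →ₗ[F] P)
    (hassoc : ∀ x y z : P, mul (mul x y) z = mul x (mul y z))
    (hleib : ∀ x y z : P, (2 : F) • mul x (bra y z) = bra (mul x y) z + bra y (mul x z))
    -- `(P, [·,·])` is directly indecomposable: for Lie ideals `I, J` with `P = I ⊕ J`,
    -- one has `I = 0` or `J = 0`.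
    (hind : ∀ I J : Submodule F P,
      (∀ y : P, ∀ x ∈ I, bra y x ∈ I) → (∀ y : P, ∀ x ∈ J, bra y x ∈ J) →
      I ⊓ J = ⊥ → I ⊔ J = ⊤ → I = ⊥ ∨ J = ⊥) :
    ∀ x : P, ∃ lam : F,
      LinearMap.charpoly (mul x) = (X - C lam) ^ (Module.finrank F P) := by
  intro x
  have hT : IsHalfDerivation bra (mul x) := hleib x
  have hT2 : IsHalfDerivation bra (mul x * mul x) := by
    rw [show mul x * mul x = mul (mul x x) from LinearMap.ext fun y => (hassoc x x y).symm]
    exact hleib _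
  exact exists_charpoly_eq_X_sub_C_pow (mul x) fun _ _ => hT.eq_of_hasEigenvalue hchar hT2 hind

open Polynomial in
/-- If the Lie algebra of an `n`-dimensional transposed Poisson algebra
over an algebraically closed field of characteristic `≠ 2` is directly indecomposable,
then for every `x` the characteristic polynomial of `P_x = mul x` is `(t - λ_x)^n`. -/
theorem tpa_indecomposable_charpoly {F P : Type*} [Field F] [IsAlgClosed F]
    (hchar : (2 : F) ≠ 0)
    [AddCommGroup P] [Module F P] [FiniteDimensional F P]
    (mul bra : P →ₗ[F] P →ₗ[F] P)
    (hcomm : ∀ x y : P, mul x y = mul y x)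
    (hassoc : ∀ x y z : P, mul (mul x y) z = mul x (mul y z))
    (halt : ∀ x : P, bra x x = 0)
    (hjac : ∀ x y z : P, bra x (bra y z) + bra y (bra z x) + bra z (bra x y) = 0)
    (hleib : ∀ x y z : P, (2 : F) • mul x (bra y z) = bra (mul x y) z + bra y (mul x z))
    -- `(P, [·,·])` is directly indecomposable: for Lie ideals `I, J` with `P = I ⊕ J`,
    -- one has `I = 0` or `J = 0`.
    (hind : ∀ I J : Submodule F P,
      (∀ y : P, ∀ x ∈ I, bra y x ∈ I) → (∀ y : P, ∀ x ∈ J, bra y x ∈ J) →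
      I ⊓ J = ⊥ → I ⊔ J = ⊤ → I = ⊥ ∨ J = ⊥) :
    ∀ x : P, ∃ lam : F,
      LinearMap.charpoly (mul x) = (X - C lam) ^ (Module.finrank F P) :=
  tpa_indecomposable_charpoly_general hchar mul bra hassoc hleib hind
end

section
/- Let (P, ∘, [·,·]) be a transposed Poisson algebra whose Lie bracket is perfect, and let (α, β, V) be an irreducible representation of P with β ≠ 0. Then (β, V) is an irreducible representation of the Lie algebra (P, [·,·]). -/
/-- If `(P, ∘, [·,·])` is a transposed Poisson algebra with perfect Lie
bracket and `(α, β, V)` is an irreducible representation of `P` with `β ≠ 0`,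
then `(β, V)` is an irreducible representation of the Lie algebra `(P, [·,·])`. -/
theorem tpa_irreducible_rep_lie_irreducible {F P V : Type*} [Field F] (hchar : (2 : F) ≠ 0)
    [AddCommGroup P] [Module F P] [AddCommGroup V] [Module F V]
    (mul bra : P →ₗ[F] P →ₗ[F] P)
    (hcomm : ∀ x y : P, mul x y = mul y x)
    (hassoc : ∀ x y z : P, mul (mul x y) z = mul x (mul y z))
    (halt : ∀ x : P, bra x x = 0)
    (hjac : ∀ x y z : P, bra x (bra y z) + bra y (bra z x) + bra z (bra x y) = 0)
    (hleib : ∀ x y z : P, (2 : F) • mul x (bra y z) = bra (mul x y) z + bra y (mul x z))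
    -- the Lie bracket is perfect
    (hperf : Submodule.span F {z : P | ∃ x y : P, bra x y = z} = ⊤)
    -- `(α, β, V)` is a representation of the transposed Poisson algebra `P`
    (α β : P →ₗ[F] Module.End F V)
    (hα : ∀ x y : P, α (mul x y) = α x * α y)
    (hβ : ∀ x y : P, β (bra x y) = β x * β y - β y * β x)
    (hcomp1 : ∀ x y : P, (2 : F) • (α x * β y) = β (mul x y) + β y * α x)
    (hcomp2 : ∀ x y : P, (2 : F) • α (bra x y) = β x * α y - β y * α x)
    -- irreducibility of `(α, β, V)`
    (hirr : ∀ W : Submodule F V, (∀ x : P, ∀ w ∈ W, α x w ∈ W ∧ β x w ∈ W) →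
      W = ⊥ ∨ W = ⊤)
    (hβne : β ≠ 0) :
    ∀ W : Submodule F V, (∀ x : P, ∀ w ∈ W, β x w ∈ W) → W = ⊥ ∨ W = ⊤ := by
  -- pointwise versions of the compatibility identities
  have hA : ∀ (x u : P) (v : V),
      (2:F) • α x (β u v) = β (mul x u) v + β u (α x v) := by
    intro x u v
    have h := LinearMap.congr_fun (hcomp1 x u) v
    simpa using h
  have hA' : ∀ (x u : P) (v : V),
      β u (α x v) = (2:F) • α x (β u v) - β (mul x u) v := by
    intro x u v
    rw [eq_sub_iff_add_eq, hA x u v, add_comm]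
  have hB : ∀ (x y : P) (v : V),
      β (bra x y) v = β x (β y v) - β y (β x v) := by
    intro x y v
    have h := LinearMap.congr_fun (hβ x y) v
    simpa using h
  intro W hW
  -- dividing by 2 inside W
  have hhalf : ∀ v : V, (2:F) • v ∈ W → v ∈ W := by
    intro v hv
    have h2 := W.smul_mem ((2:F)⁻¹) hv
    rwa [smul_smul, inv_mul_cancel₀ hchar, one_smul] at h2
  -- key step: α x (β (bra y z) w) ∈ W for w ∈ W
  have hkey : ∀ x y z : P, ∀ w ∈ W, α x (β (bra y z) w) ∈ W := by
    intro x y z w hw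
    have big := hA x (bra y z) w
    rw [hB y z (α x w)] at big
    rw [hA' x z w, hA' x y w] at big
    rw [map_sub, map_sub, map_smul, map_smul] at big
    rw [hA' x y (β z w), hA' x z (β y w)] at big
    have h1 : α x (β (bra y z) w) = α x (β y (β z w)) - α x (β z (β y w)) := by
      rw [hB y z w, map_sub]
    rw [h1] at big ⊢
    have big2 : (2:F) • (α x (β y (β z w)) - α x (β z (β y w))) =
        (2:F) • β (mul x y) (β z w) + β y (β (mul x z) w)
          - (2:F) • β (mul x z) (β y w) - β z (β (mul x y) w)
          - β (mul x (bra y z)) w := by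
      linear_combination (norm := module) -big
    apply hhalf
    rw [big2]
    have m1 : β (mul x y) (β z w) ∈ W := hW _ _ (hW _ _ hw)
    have m2 : β y (β (mul x z) w) ∈ W := hW _ _ (hW _ _ hw)
    have m3 : β (mul x z) (β y w) ∈ W := hW _ _ (hW _ _ hw)
    have m4 : β z (β (mul x y) w) ∈ W := hW _ _ (hW _ _ hw)
    have m5 : β (mul x (bra y z)) w ∈ W := hW _ _ hw
    exact sub_mem (sub_mem (sub_mem (add_mem (W.smul_mem _ m1) m2) (W.smul_mem _ m3)) m4) m5
  -- by perfectness, α x (β u w) ∈ W for all u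
  have hαβ : ∀ x u : P, ∀ w ∈ W, α x (β u w) ∈ W := by
    intro x u w hw
    let L : P →ₗ[F] V :=
      { toFun := fun u => α x (β u w)
        map_add' := by intro a b; simp
        map_smul' := by intro c a; simp }
    have hle : Submodule.span F {z : P | ∃ a b : P, bra a b = z} ≤ Submodule.comap L W := by
      rw [Submodule.span_le]
      rintro z ⟨a, b, rfl⟩
      exact hkey x a b w hw
    rw [hperf] at hle
    exact hle (Submodule.mem_top)
  -- consequently β u (α x w) ∈ W for w ∈ W
  have hβα : ∀ x u : P, ∀ w ∈ W, β u (α x w) ∈ W := by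
    intro x u w hw
    rw [hA' x u w]
    exact sub_mem (W.smul_mem _ (hαβ x u w hw)) (hW _ _ hw)
  by_cases hbot : W = ⊥
  · exact Or.inl hbot
  -- W is nonzero; consider W₁ = W + α(P)W, a subrepresentation
  right
  set G1 : Set V := {v : V | ∃ x : P, ∃ w ∈ W, α x w = v} with hG1
  set W1 : Submodule F V := W ⊔ Submodule.span F G1 with hW1
  have hWle1 : W ≤ W1 := le_sup_left
  have hW1inv : ∀ x : P, ∀ v ∈ W1, α x v ∈ W1 ∧ β x v ∈ W1 := by
    intro x
    have ha : W1 ≤ Submodule.comap (α x) W1 := by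
      rw [hW1]
      apply sup_le
      · intro w hw
        exact Submodule.mem_sup_right (Submodule.subset_span ⟨x, w, hw, rfl⟩)
      · rw [Submodule.span_le]
        rintro v ⟨y, w, hw, rfl⟩
        have : α x (α y w) = α (mul x y) w := by
          rw [hα x y]; rfl
        show α x (α y w) ∈ W1
        rw [this]
        exact Submodule.mem_sup_right (Submodule.subset_span ⟨mul x y, w, hw, rfl⟩)
    have hb : W1 ≤ Submodule.comap (β x) W1 := by
      rw [hW1]
      apply sup_le
      · intro w hw
        exact Submodule.mem_sup_left (hW x w hw)
      · rw [Submodule.span_le]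
        rintro v ⟨y, w, hw, rfl⟩
        exact hWle1 (hβα y x w hw)
    exact fun v hv => ⟨ha hv, hb hv⟩
  have hW1top : W1 = ⊤ := by
    rcases hirr W1 hW1inv with h | h
    · exact absurd (le_bot_iff.mp (h ▸ hWle1)) hbot
    · exact h
  -- hence β u v ∈ W for every v ∈ V
  have hBV : ∀ (u : P) (v : V), β u v ∈ W := by
    intro u v
    have hle : W1 ≤ Submodule.comap (β u) W := by
      rw [hW1]
      apply sup_le
      · intro w hw; exact hW u w hw
      · rw [Submodule.span_le]
        rintro t ⟨y, w, hw, rfl⟩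
        exact hβα y u w hw
    rw [hW1top] at hle
    exact hle Submodule.mem_top
  -- W₂ = β(P)V is a subrepresentation contained in W
  set G2 : Set V := {v : V | ∃ (a : P) (b : V), β a b = v} with hG2
  set W2 : Submodule F V := Submodule.span F G2 with hW2
  have hW2inv : ∀ x : P, ∀ v ∈ W2, α x v ∈ W2 ∧ β x v ∈ W2 := by
    intro x
    have ha : W2 ≤ Submodule.comap (α x) W2 := by
      rw [hW2, Submodule.span_le]
      rintro v ⟨a, b, rfl⟩
      have he : α x (β a b) = (2:F)⁻¹ • (β (mul x a) b + β a (α x b)) := by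
        rw [← hA x a b, smul_smul, inv_mul_cancel₀ hchar, one_smul]
      show α x (β a b) ∈ W2
      rw [he]
      exact Submodule.smul_mem _ _ (add_mem (Submodule.subset_span ⟨mul x a, b, rfl⟩)
        (Submodule.subset_span ⟨a, α x b, rfl⟩))
    have hb : W2 ≤ Submodule.comap (β x) W2 := by
      rw [hW2, Submodule.span_le]
      rintro v ⟨a, b, rfl⟩
      have he : β x (β a b) = β (bra x a) b + β a (β x b) := by
        rw [hB x a b]; abel
      show β x (β a b) ∈ W2
      rw [he]
      exact add_mem (Submodule.subset_span ⟨bra x a, b, rfl⟩)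
        (Submodule.subset_span ⟨a, β x b, rfl⟩)
    exact fun v hv => ⟨ha hv, hb hv⟩
  rcases hirr W2 hW2inv with h | h
  · -- W₂ = ⊥ would force β = 0
    exfalso
    apply hβne
    ext a b
    have : β a b ∈ W2 := Submodule.subset_span ⟨a, b, rfl⟩
    rw [h] at this
    simpa using this
  · -- W₂ = ⊤ and W₂ ≤ W give W = ⊤
    have hle : W2 ≤ W := by
      rw [hW2, Submodule.span_le]
      rintro v ⟨a, b, rfl⟩
      exact hBV a b
    rw [h] at hle
    exact top_le_iff.mp hle
end

section
/- Let (P, ∘, [·,·]) be a transposed Poisson algebra whose Lie bracket is perfect, and let (β, V) be a representation of the Lie algebra (P, [·,·]). Then there exists at most one linear map α : P → End(V) with α(x∘y) = α(x)α(y) for all x, y such that (α, β, V) is a representation of the transposed Poisson algebra P; that is, if (α, β, V) and (α', β, V) are both representations of P, then α = α'. -/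
/-- If `(P, ∘, [·,·])` is a transposed Poisson algebra with perfect Lie
bracket and `(β, V)` is a representation of the Lie algebra `(P, [·,·])`, then there is
at most one associative action `α` making `(α, β, V)` a representation of the transposed
Poisson algebra `P`: if `(α, β, V)` and `(α', β, V)` are both representations, `α = α'`. -/
theorem tpa_rep_alpha_unique {F P V : Type*} [Field F] (hchar : (2 : F) ≠ 0)
    [AddCommGroup P] [Module F P] [AddCommGroup V] [Module F V]
    (mul bra : P →ₗ[F] P →ₗ[F] P)
    (hcomm : ∀ x y : P, mul x y = mul y x)
    (hassoc : ∀ x y z : P, mul (mul x y) z = mul x (mul y z))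
    (halt : ∀ x : P, bra x x = 0)
    (hjac : ∀ x y z : P, bra x (bra y z) + bra y (bra z x) + bra z (bra x y) = 0)
    (hleib : ∀ x y z : P, (2 : F) • mul x (bra y z) = bra (mul x y) z + bra y (mul x z))
    -- the Lie bracket is perfect
    (hperf : Submodule.span F {z : P | ∃ x y : P, bra x y = z} = ⊤)
    -- `(β, V)` is a representation of the Lie algebra `(P, [·,·])`
    (β : P →ₗ[F] Module.End F V)
    (hβ : ∀ x y : P, β (bra x y) = β x * β y - β y * β x)
    -- `α` and `α'` both make `(·, β, V)` a representation of the transposed Poisson algebra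
    (α α' : P →ₗ[F] Module.End F V)
    (hα : ∀ x y : P, α (mul x y) = α x * α y)
    (hcomp1 : ∀ x y : P, (2 : F) • (α x * β y) = β (mul x y) + β y * α x)
    (hcomp2 : ∀ x y : P, (2 : F) • α (bra x y) = β x * α y - β y * α x)
    (hα' : ∀ x y : P, α' (mul x y) = α' x * α' y)
    (hcomp1' : ∀ x y : P, (2 : F) • (α' x * β y) = β (mul x y) + β y * α' x)
    (hcomp2' : ∀ x y : P, (2 : F) • α' (bra x y) = β x * α' y - β y * α' x) :
    α = α' := by
  have hDdef : ∀ x : P, (α - α') x = α x - α' x := fun x => rfl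
  -- Step 1: 2 • (D x * β y) = β y * D x
  have h2 : ∀ x y : P, (2 : F) • ((α x - α' x) * β y) = β y * (α x - α' x) := by
    intro x y
    have h1 := hcomp1 x y
    have h1' := hcomp1' x y
    have e : (2 : F) • ((α x - α' x) * β y)
        = (2 : F) • (α x * β y) - (2 : F) • (α' x * β y) := by
      rw [sub_mul, smul_sub]
    rw [e, h1, h1', mul_sub]
    abel
  -- Key computation: β (bra u v) * D x = 4 • (D x * β (bra u v))
  have e1 : ∀ x u v : P, β (bra u v) * (α x - α' x)
      = (4 : F) • ((α x - α' x) * β (bra u v)) := by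
    intro x u v
    set A : Module.End F V := α x - α' x with hA
    have hu : β u * A = (2 : F) • (A * β u) := (h2 x u).symm
    have hv : β v * A = (2 : F) • (A * β v) := (h2 x v).symm
    simp only [hβ, sub_mul, mul_sub, smul_sub, mul_assoc]
    simp only [hu, hv, mul_smul_comm]
    simp only [← mul_assoc]
    simp only [hu, hv, smul_mul_assoc, smul_smul]
    norm_num
  -- Step 2: D x * β (bra u v) = 0
  have hzero : ∀ x u v : P, (α x - α' x) * β (bra u v) = 0 := by
    intro x u v
    have e2 := h2 x (bra u v)
    rw [e1 x u v] at e2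
    have e3 : ((4 : F) - 2) • ((α x - α' x) * β (bra u v)) = 0 := by
      rw [sub_smul, e2, sub_self]
    have h42 : (4 : F) - 2 ≠ 0 := by
      intro h
      apply hchar
      linear_combination h
    rcases smul_eq_zero.mp e3 with h | h
    · exact absurd h h42
    · exact h
  -- Step 3: by perfectness, β z * D x = 0 for all z
  have hβD : ∀ x z : P, β z * (α x - α' x) = 0 := by
    intro x z
    set f : P →ₗ[F] Module.End F V :=
      (LinearMap.mulRight F (α x - α' x)).comp β with hf
    have hker : Submodule.span F {z : P | ∃ u v : P, bra u v = z} ≤ LinearMap.ker f := by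
      apply Submodule.span_le.mpr
      rintro w ⟨u, v, rfl⟩
      simp only [SetLike.mem_coe, LinearMap.mem_ker, hf, LinearMap.comp_apply,
        LinearMap.mulRight_apply]
      rw [e1 x u v, hzero x u v, smul_zero]
    have hz : z ∈ LinearMap.ker f := by
      apply hker
      rw [hperf]
      trivial
    simpa [hf] using hz
  -- Step 4: α and α' agree on brackets
  have hbr : ∀ x y : P, α (bra x y) - α' (bra x y) = 0 := by
    intro x y
    have e : (2 : F) • (α (bra x y) - α' (bra x y))
        = (2 : F) • α (bra x y) - (2 : F) • α' (bra x y) := smul_sub _ _ _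
    rw [hcomp2, hcomp2'] at e
    have e2 : (2 : F) • (α (bra x y) - α' (bra x y))
        = β x * (α y - α' y) - β y * (α x - α' x) := by
      rw [e, mul_sub, mul_sub]; abel
    rw [hβD y x, hβD x y, sub_self] at e2
    rcases smul_eq_zero.mp e2 with h | h
    · exact absurd h hchar
    · exact h
  -- Step 5: conclude
  have hfin : α - α' = 0 := by
    apply LinearMap.ext
    intro z
    have hker : Submodule.span F {z : P | ∃ u v : P, bra u v = z}
        ≤ LinearMap.ker (α - α') := by
      apply Submodule.span_le.mpr
      rintro w ⟨u, v, rfl⟩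
      simpa [SetLike.mem_coe, LinearMap.mem_ker, hDdef] using hbr u v
    have hz : z ∈ LinearMap.ker (α - α') := by
      apply hker; rw [hperf]; trivial
    simpa using hz
  exact sub_eq_zero.mp hfin
end

section
/- Let (P, ∘, [·,·]) be a transposed Poisson algebra with perfect Lie bracket such that (P, ∘) is unital with unit 1, and let (α, β, V) be an irreducible representation of P with β ≠ 0. Then α(1) is the identity operator on V. -/
/-- If `(P, ∘, [·,·])` is a unital transposed Poisson algebra with
perfect Lie bracket and `(α, β, V)` is an irreducible representation with `β ≠ 0`,
then `α(1)` is the identity operator on `V`. -/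
theorem tpa_rep_alpha_one {F P V : Type*} [Field F] (hchar : (2 : F) ≠ 0)
    [AddCommGroup P] [Module F P] [AddCommGroup V] [Module F V]
    (mul bra : P →ₗ[F] P →ₗ[F] P)
    (hcomm : ∀ x y : P, mul x y = mul y x)
    (hassoc : ∀ x y z : P, mul (mul x y) z = mul x (mul y z))
    (halt : ∀ x : P, bra x x = 0)
    (hjac : ∀ x y z : P, bra x (bra y z) + bra y (bra z x) + bra z (bra x y) = 0)
    (hleib : ∀ x y z : P, (2 : F) • mul x (bra y z) = bra (mul x y) z + bra y (mul x z))
    -- the Lie bracket is perfect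
    (hperf : Submodule.span F {z : P | ∃ x y : P, bra x y = z} = ⊤)
    -- `(P, ∘)` is unital with unit `e`
    (e : P) (he : ∀ x : P, mul e x = x)
    -- `(α, β, V)` is a representation of the transposed Poisson algebra `P`
    (α β : P →ₗ[F] Module.End F V)
    (hα : ∀ x y : P, α (mul x y) = α x * α y)
    (hβ : ∀ x y : P, β (bra x y) = β x * β y - β y * β x)
    (hcomp1 : ∀ x y : P, (2 : F) • (α x * β y) = β (mul x y) + β y * α x)
    (hcomp2 : ∀ x y : P, (2 : F) • α (bra x y) = β x * α y - β y * α x)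
    -- irreducibility of `(α, β, V)`
    (hirr : ∀ W : Submodule F V, (∀ x : P, ∀ w ∈ W, α x w ∈ W ∧ β x w ∈ W) →
      W = ⊥ ∨ W = ⊤)
    (hβne : β ≠ 0) :
    α e = (1 : Module.End F V) := by
  have hAe : α e * α e = α e := by rw [← hα, he]
  set W : Submodule F V := LinearMap.ker (α e - 1) with hW
  have hmem : ∀ v, v ∈ W ↔ α e v = v := by
    intro v
    simp [hW, LinearMap.mem_ker, sub_eq_zero, LinearMap.sub_apply]
  have hinv : ∀ x : P, ∀ w ∈ W, α x w ∈ W ∧ β x w ∈ W := by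
    intro x w hw
    rw [hmem] at hw
    constructor
    · rw [hmem]
      have hxe : α e * α x = α x := by rw [← hα, he]
      calc α e (α x w) = (α e * α x) w := rfl
        _ = α x w := by rw [hxe]
    · rw [hmem]
      have h1 := hcomp1 e x
      rw [he] at h1
      have h2 : ((2:F) • (α e * β x)) w = (β x + β x * α e) w := by rw [h1]
      simp only [LinearMap.smul_apply, Module.End.mul_apply, LinearMap.add_apply, hw] at h2
      have h3 : (2:F) • (α e (β x w)) = (2:F) • (β x w) := by
        rw [h2, two_smul]
      exact smul_right_injective V hchar h3
  rcases hirr W hinv with hbot | htop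
  · exfalso
    have hA0 : α e = 0 := by
      ext v
      have hv : α e v ∈ W := by
        rw [hmem]
        calc α e (α e v) = (α e * α e) v := rfl
          _ = α e v := by rw [hAe]
      rw [hbot] at hv
      simpa using hv
    have hb : ∀ y : P, β y = 0 := by
      intro y
      have h1 := hcomp1 e y
      rw [he, hA0, zero_mul, mul_zero, smul_zero, add_zero] at h1
      exact h1.symm
    exact hβne (by ext y v; simp [hb y])
  · ext v
    have hv : v ∈ W := htop ▸ Submodule.mem_top
    simpa using (hmem v).mp hv
end
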